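/- For any two integers M ≥ 3 and M' ≥ 3, constants C0 > 0 and γ̃ > 0, the infimum over time-allocation vectors η in the unit simplex of dimension M and azimuth angle vectors φ ∈ ℝ^M (with positive denominator) of CRLB(η, φ) = C0·(Σ_{m=1}^M η_m γ̃)/(Σ_{1≤j<i≤M} η_j γ̃ · η_i γ̃ · sin²(φ_i − φ_j)) equals the corresponding infimum with M replaced by M'; both infima equal 4C0/γ̃ and are attained. In particular, the optimal single-target localization performance under flexible base-station deployment is independent of the number of base stations. -/

import Mathlib

open Real Finset

/-- Denominator of the equal-SNR single-target localization CRLB. -/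
noncomputable def crlbDen (M : ℕ) (γ : ℝ) (η φ : Fin M → ℝ) : ℝ :=
  ∑ i : Fin M, ∑ j ∈ Finset.Iio i, (η j * γ) * (η i * γ) * sin (φ i - φ j) ^ 2

/-- The set of CRLB values achievable with `M` base stations, over all time allocations
`η` in the unit simplex and all azimuth vectors `φ` with positive denominator. -/
noncomputable def crlbSet (M : ℕ) (C0 γ : ℝ) : Set ℝ :=
  {v | ∃ η φ : Fin M → ℝ, (∀ m, 0 ≤ η m) ∧ (∑ m, η m) = 1 ∧ 0 < crlbDen M γ η φ ∧
        v = C0 * (∑ m, η m * γ) / crlbDen M γ η φ}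

/-! Since `2 sin² (a - b) = 1 - cos 2a cos 2b - sin 2a sin 2b`, the denominator equals
`γ² / 4 · ((∑ η)² - |∑ η_m e^{2iφ_m}|²) ≤ γ² / 4` on the simplex. Hence the CRLB is at least
`C0 γ / (γ² / 4) = 4 C0 / γ`, with equality for two stations of weight `1/2` at right angles
and all other weights zero, for every `M ≥ 2`. -/

theorem Finset.sum_sum_eq_two_nsmul_sum_sum_Iio {ι M : Type*} [Fintype ι] [LinearOrder ι]
    [LocallyFiniteOrderBot ι] [AddCommMonoid M] (g : ι → ι → M)
    (hsymm : ∀ i j, g i j = g j i) (hdiag : ∀ i, g i i = 0) :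
    ∑ i, ∑ j, g i j = 2 • ∑ i, ∑ j ∈ Iio i, g i j := by
  have hsplit : ∀ i j, g i j = (if j < i then g i j else 0) + (if i < j then g i j else 0) := by
    intro i j
    rcases lt_trichotomy i j with h | rfl | h
    · simp [h, h.not_gt]
    · simp [hdiag]
    · simp [h, h.not_gt]
  have hIio : ∀ i, ∑ j, (if j < i then g i j else 0) = ∑ j ∈ Iio i, g i j := by
    intro i
    rw [← sum_filter, filter_gt_eq_Iio]
  calc ∑ i, ∑ j, g i j
      = ∑ i, ∑ j, (if j < i then g i j else 0) + ∑ i, ∑ j, (if i < j then g i j else 0) := by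
        simp only [← sum_add_distrib, ← hsplit]
    _ = ∑ i, ∑ j, (if j < i then g i j else 0) + ∑ i, ∑ j, (if j < i then g i j else 0) := by
        rw [sum_comm (f := fun i j => if i < j then g i j else 0)]
        simp only [hsymm]
    _ = 2 • ∑ i, ∑ j ∈ Iio i, g i j := by simp only [hIio, two_nsmul]

theorem two_mul_sin_sq_sub (a b : ℝ) :
    2 * sin (a - b) ^ 2 = 1 - cos (2 * a) * cos (2 * b) - sin (2 * a) * sin (2 * b) := by
  rw [sub_sub, ← cos_sub, ← mul_sub, cos_two_mul, cos_sq']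
  ring

theorem sum_sum_mul_mul_sin_sq_sub {ι : Type*} [Fintype ι] (η φ : ι → ℝ) :
    2 * ∑ i, ∑ j, η i * η j * sin (φ i - φ j) ^ 2 =
      (∑ i, η i) ^ 2 - (∑ i, η i * cos (2 * φ i)) ^ 2 - (∑ i, η i * sin (2 * φ i)) ^ 2 := by
  rw [sq, sq, sq, sum_mul_sum, sum_mul_sum, sum_mul_sum, mul_sum]
  simp only [mul_sum, ← sum_sub_distrib]
  refine sum_congr rfl fun i _ => sum_congr rfl fun j _ => ?_
  linear_combination η i * η j * two_mul_sin_sq_sub (φ i) (φ j)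

theorem four_mul_crlbDen (M : ℕ) (γ : ℝ) (η φ : Fin M → ℝ) :
    4 * crlbDen M γ η φ = γ ^ 2 *
      ((∑ i, η i) ^ 2 - (∑ i, η i * cos (2 * φ i)) ^ 2 - (∑ i, η i * sin (2 * φ i)) ^ 2) := by
  set g : Fin M → Fin M → ℝ := fun i j => η i * η j * sin (φ i - φ j) ^ 2
  have hsymm : ∀ i j, g i j = g j i := fun i j => by
    simp only [g, ← neg_sub (φ i), sin_neg, neg_sq]
    ring
  have hden : crlbDen M γ η φ = γ ^ 2 * ∑ i, ∑ j ∈ Iio i, g i j := by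
    simp only [crlbDen, g, mul_sum]
    exact sum_congr rfl fun i _ => sum_congr rfl fun j _ => by ring
  rw [← sum_sum_mul_mul_sin_sq_sub,
    sum_sum_eq_two_nsmul_sum_sum_Iio g hsymm (fun i => by simp [g]), hden, two_nsmul]
  ring

theorem four_mul_crlbDen_le (M : ℕ) (γ : ℝ) (η φ : Fin M → ℝ) :
    4 * crlbDen M γ η φ ≤ γ ^ 2 * (∑ i, η i) ^ 2 := by
  rw [four_mul_crlbDen]
  gcongr
  nlinarith [sq_nonneg (∑ i, η i * cos (2 * φ i)), sq_nonneg (∑ i, η i * sin (2 * φ i))]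

theorem four_mul_div_le_of_mem_crlbSet {M : ℕ} {C0 γ v : ℝ} (hC0 : 0 ≤ C0) (hγ : 0 < γ)
    (hv : v ∈ crlbSet M C0 γ) : 4 * C0 / γ ≤ v := by
  obtain ⟨η, φ, -, hη, hden, rfl⟩ := hv
  have hle : 4 * crlbDen M γ η φ ≤ γ ^ 2 := by simpa [hη] using four_mul_crlbDen_le M γ η φ
  rw [← sum_mul, hη, one_mul, div_le_div_iff₀ hγ hden]
  nlinarith

theorem four_mul_div_mem_crlbSet {M : ℕ} (hM : 2 ≤ M) (C0 : ℝ) {γ : ℝ} (hγ : γ ≠ 0) :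
    4 * C0 / γ ∈ crlbSet M C0 γ := by
  obtain ⟨k, rfl⟩ : ∃ k, M = k + 2 := ⟨M - 2, by omega⟩
  let η : Fin (k + 2) → ℝ := Fin.cons (1 / 2) (Fin.cons (1 / 2) 0)
  let φ : Fin (k + 2) → ℝ := Fin.cons 0 (Fin.cons (π / 2) 0)
  have hη : ∑ m, η m = 1 := by norm_num [η, Fin.sum_univ_succ]
  have hden : crlbDen (k + 2) γ η φ = γ ^ 2 / 4 := by
    rw [eq_div_iff four_ne_zero, mul_comm, four_mul_crlbDen]
    norm_num [η, φ, Fin.sum_univ_succ, mul_div_cancel₀]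
  refine ⟨η, φ, ?_, hη, by rw [hden]; positivity, ?_⟩
  · exact Fin.cases (by norm_num [η]) (Fin.cases (by norm_num [η]) fun _ => le_rfl)
  · rw [← sum_mul, hη, hden]
    field_simp

theorem isLeast_crlbSet {M : ℕ} (hM : 2 ≤ M) {C0 γ : ℝ} (hC0 : 0 ≤ C0) (hγ : 0 < γ) :
    IsLeast (crlbSet M C0 γ) (4 * C0 / γ) :=
  ⟨four_mul_div_mem_crlbSet hM C0 hγ.ne', fun _ => four_mul_div_le_of_mem_crlbSet hC0 hγ⟩

/-- For any `M, M' ≥ 3`, the infimum of the CRLB over feasible `(η, φ)` is the same for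
`M` and `M'` base stations: both infima equal `4C0/γ` and are attained, i.e. the optimal
single-target localization performance under flexible BS deployment is independent of the
number of base stations. -/
theorem crlb_infimum_independent_of_M (C0 γ : ℝ) (hC0 : 0 < C0) (hγ : 0 < γ)
    (M M' : ℕ) (hM : 3 ≤ M) (hM' : 3 ≤ M') :
    IsLeast (crlbSet M C0 γ) (4 * C0 / γ)
    ∧ IsLeast (crlbSet M' C0 γ) (4 * C0 / γ)
    ∧ sInf (crlbSet M C0 γ) = sInf (crlbSet M' C0 γ)
    ∧ sInf (crlbSet M C0 γ) = 4 * C0 / γ := by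
  have hleast := isLeast_crlbSet (by omega : 2 ≤ M) hC0.le hγ
  have hleast' := isLeast_crlbSet (by omega : 2 ≤ M') hC0.le hγ
  exact ⟨hleast, hleast', by rw [hleast.csInf_eq, hleast'.csInf_eq], hleast.csInf_eq⟩
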